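/- arXiv:1109.0064 — 4 statements merged into one kernel-verified Lean document; each statement's English description precedes it below -/
import Mathlib

section
/- Let Q̃ be a cochain complex of vector spaces over a field F of characteristic 2, equipped with a three-step filtration with associated graded pieces U₀, Q, U₂ (in filtration degrees 0, 1, 2), structure maps i : U₀ → Q, j : Q → U₂ (chain maps) and η : U₀ → U₂ satisfying d′η + ηd = ji, where d denotes the differentials on U₀ and Q and d′ the differential on U₂. If η is an isomorphism of graded F-modules, then d + iη⁻¹j is a differential on Q (i.e., (d + iη⁻¹j)² = 0). -/
/-! Write `h = i η⁻¹ j` for the perturbation. Conjugating the homotopy relation by `η` gives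
`η⁻¹ (j i) η⁻¹ = η⁻¹ d' + d η⁻¹`, and since `i`, `j` are chain maps this turns `h²` into
`d h + h d`. Hence `(d + h)² = 2 (d h + h d)`, which vanishes in characteristic 2. -/

section Perturbation

variable {R U0 Q U2 : Type*} [Semiring R]
  [AddCommMonoid U0] [Module R U0] [AddCommMonoid Q] [Module R Q]
  [AddCommMonoid U2] [Module R U2]
  {dU0 : U0 →ₗ[R] U0} {dQ : Q →ₗ[R] Q} {d' : U2 →ₗ[R] U2}
  {i : U0 →ₗ[R] Q} {j : Q →ₗ[R] U2} {η : U0 ≃ₗ[R] U2}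

theorem comp_symm_comp_self_eq_anticommutator
    (hi : dQ ∘ₗ i = i ∘ₗ dU0) (hj : d' ∘ₗ j = j ∘ₗ dQ)
    (hη : d' ∘ₗ η.toLinearMap + η.toLinearMap ∘ₗ dU0 = j ∘ₗ i) :
    (i ∘ₗ η.symm.toLinearMap ∘ₗ j) ∘ₗ (i ∘ₗ η.symm.toLinearMap ∘ₗ j) =
      dQ ∘ₗ (i ∘ₗ η.symm.toLinearMap ∘ₗ j) + (i ∘ₗ η.symm.toLinearMap ∘ₗ j) ∘ₗ dQ := by
  ext x
  have hji := LinearMap.congr_fun hη (η.symm (j x))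
  have hjd := LinearMap.congr_fun hj x
  have hid := LinearMap.congr_fun hi (η.symm (j x))
  simp only [LinearMap.add_apply, LinearMap.comp_apply, LinearEquiv.coe_coe,
    η.apply_symm_apply] at hji hjd hid ⊢
  rw [← hji, map_add, η.symm_apply_apply, map_add, hjd, hid, add_comm]

end Perturbation

theorem stmt_11_general {F U0 Q U2 : Type*} [Field F] [CharP F 2]
    [AddCommGroup U0] [Module F U0] [AddCommGroup Q] [Module F Q]
    [AddCommGroup U2] [Module F U2]
    (dU0 : U0 →ₗ[F] U0) (dQ : Q →ₗ[F] Q) (d' : U2 →ₗ[F] U2)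
    (i : U0 →ₗ[F] Q) (j : Q →ₗ[F] U2) (η : U0 ≃ₗ[F] U2)
    (hdQ : dQ ∘ₗ dQ = 0)
    (hi : dQ ∘ₗ i = i ∘ₗ dU0) (hj : d' ∘ₗ j = j ∘ₗ dQ)
    (hη : d' ∘ₗ η.toLinearMap + η.toLinearMap ∘ₗ dU0 = j ∘ₗ i) :
    (dQ + i ∘ₗ η.symm.toLinearMap ∘ₗ j) ∘ₗ (dQ + i ∘ₗ η.symm.toLinearMap ∘ₗ j) = 0 := by
  have hh := comp_symm_comp_self_eq_anticommutator hi hj hη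
  set h := i ∘ₗ η.symm.toLinearMap ∘ₗ j
  calc (dQ + h) ∘ₗ (dQ + h) = dQ ∘ₗ dQ + (dQ ∘ₗ h + h ∘ₗ dQ) + h ∘ₗ h := by
        simp only [LinearMap.comp_add, LinearMap.add_comp]
        abel
    _ = (2 : F) • (dQ ∘ₗ h + h ∘ₗ dQ) := by rw [hdQ, hh, zero_add, two_smul]
    _ = 0 := by rw [CharTwo.two_eq_zero, zero_smul]

/-- Over a field of characteristic 2: given a three-step filtered complex with
associated graded pieces `U₀, Q, U₂`, internal differentials `dU0, dQ, d'`,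
chain maps `i : U₀ → Q`, `j : Q → U₂`, and a homotopy `η : U₀ → U₂` with
`d'η + ηd = ji`; if `η` is an isomorphism then `d + iη⁻¹j` is a differential
on `Q`, i.e. `(dQ + i ∘ η⁻¹ ∘ j)² = 0`. -/
theorem stmt_11 {F U0 Q U2 : Type*} [Field F] [CharP F 2]
    [AddCommGroup U0] [Module F U0] [AddCommGroup Q] [Module F Q]
    [AddCommGroup U2] [Module F U2]
    (dU0 : U0 →ₗ[F] U0) (dQ : Q →ₗ[F] Q) (d' : U2 →ₗ[F] U2)
    (i : U0 →ₗ[F] Q) (j : Q →ₗ[F] U2) (η : U0 ≃ₗ[F] U2)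
    (hd0 : dU0 ∘ₗ dU0 = 0) (hdQ : dQ ∘ₗ dQ = 0) (hd' : d' ∘ₗ d' = 0)
    (hi : dQ ∘ₗ i = i ∘ₗ dU0) (hj : d' ∘ₗ j = j ∘ₗ dQ)
    (hη : d' ∘ₗ η.toLinearMap + η.toLinearMap ∘ₗ dU0 = j ∘ₗ i) :
    (dQ + i ∘ₗ η.symm.toLinearMap ∘ₗ j) ∘ₗ (dQ + i ∘ₗ η.symm.toLinearMap ∘ₗ j) = 0 :=
  stmt_11_general dU0 dQ d' i j η hdQ hi hj hη
end

section
/- With the hypotheses of the preceding setup (η an isomorphism, d′ = ηdη⁻¹ + jiη⁻¹), the map τ : (Q, d + iη⁻¹j)[1] → Q̃ defined by τ(x) = x + η⁻¹j(x) is an injective chain map. -/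
/-! In characteristic 2 the `U₂`-component `η a + j x` of `τ x` vanishes for `a = η⁻¹ j x`.
For the `U₀`-component, the homotopy relation `d′η + ηd = ji` at `a` together with `d′j = jd`
gives `η (d a) = j (d x + i a)`, i.e. the `U₀`-component of `τ` applied to the deformed
differential of `x`. -/

theorem CharTwo.module_add_self_eq_zero (R : Type*) {M : Type*} [Ring R] [CharP R 2]
    [AddCommGroup M] [Module R M] (m : M) : m + m = 0 := by
  rw [← two_smul R m, CharTwo.two_eq_zero, zero_smul]

theorem CharTwo.module_eq_add_of_add_eq (R : Type*) {M : Type*} [Ring R] [CharP R 2]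
    [AddCommGroup M] [Module R M] {a b c : M} (h : a + b = c) : a = b + c := by
  rw [← h, add_left_comm, CharTwo.module_add_self_eq_zero R, add_zero]

theorem LinearEquiv.apply_map_symm_add_of_homotopy {R U0 Q U2 : Type*} [Semiring R]
    [AddCommMonoid U0] [Module R U0] [AddCommMonoid Q] [Module R Q]
    [AddCommMonoid U2] [Module R U2]
    {dU0 : U0 →ₗ[R] U0} {dQ : Q →ₗ[R] Q} {d' : U2 →ₗ[R] U2}
    {i : U0 →ₗ[R] Q} {j : Q →ₗ[R] U2} {η : U0 ≃ₗ[R] U2}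
    (hj : d' ∘ₗ j = j ∘ₗ dQ) (hη : d' ∘ₗ η.toLinearMap + η.toLinearMap ∘ₗ dU0 = j ∘ₗ i)
    (x : Q) : η (dU0 (η.symm (j x))) + j (dQ x) = j (i (η.symm (j x))) := by
  have h := LinearMap.congr_fun hη (η.symm (j x))
  rw [LinearMap.add_apply, LinearMap.comp_apply, LinearEquiv.coe_coe,
    LinearEquiv.apply_symm_apply, ← LinearMap.comp_apply, hj] at h
  simpa only [LinearMap.comp_apply, LinearEquiv.coe_coe, add_comm] using h

theorem stmt_12_general {F U0 Q U2 : Type*} [Field F] [CharP F 2]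
    [AddCommGroup U0] [Module F U0] [AddCommGroup Q] [Module F Q]
    [AddCommGroup U2] [Module F U2]
    (dU0 : U0 →ₗ[F] U0) (dQ : Q →ₗ[F] Q) (d' : U2 →ₗ[F] U2)
    (i : U0 →ₗ[F] Q) (j : Q →ₗ[F] U2) (η : U0 ≃ₗ[F] U2)
    (hj : d' ∘ₗ j = j ∘ₗ dQ)
    (hη : d' ∘ₗ η.toLinearMap + η.toLinearMap ∘ₗ dU0 = j ∘ₗ i) :
    Function.Injective (fun x : Q => ((η.symm (j x), x, (0 : U2)) : U0 × Q × U2))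
    ∧ ∀ x : Q,
      ((dU0 (η.symm (j x)),
        i (η.symm (j x)) + dQ x,
        η (η.symm (j x)) + j x + d' (0 : U2)) : U0 × Q × U2)
      = (η.symm (j (dQ x + i (η.symm (j x)))),
         dQ x + i (η.symm (j x)),
         (0 : U2)) := by
  refine ⟨fun x y h => congrArg (fun p : U0 × Q × U2 => p.2.1) h, fun x => ?_⟩
  refine Prod.ext ?_ (Prod.ext (add_comm _ _) ?_)
  · rw [LinearEquiv.eq_symm_apply, map_add]
    exact CharTwo.module_eq_add_of_add_eq F (η.apply_map_symm_add_of_homotopy hj hη x)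
  · rw [LinearEquiv.apply_symm_apply, map_zero, add_zero]
    exact CharTwo.module_add_self_eq_zero F (j x)

/-- With the setup of the filtered complex `Q̃ = U₀ ⊕ Q ⊕ U₂` (total
differential `D(a,q,u) = (dU0 a, i a + dQ q, η a + j q + d' u)`), the map
`τ(x) = η⁻¹ j(x) + x` from `(Q, dQ + iη⁻¹j)[1]` to `Q̃` is an injective chain
map. -/
theorem stmt_12 {F U0 Q U2 : Type*} [Field F] [CharP F 2]
    [AddCommGroup U0] [Module F U0] [AddCommGroup Q] [Module F Q]
    [AddCommGroup U2] [Module F U2]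
    (dU0 : U0 →ₗ[F] U0) (dQ : Q →ₗ[F] Q) (d' : U2 →ₗ[F] U2)
    (i : U0 →ₗ[F] Q) (j : Q →ₗ[F] U2) (η : U0 ≃ₗ[F] U2)
    (hd0 : dU0 ∘ₗ dU0 = 0) (hdQ : dQ ∘ₗ dQ = 0) (hd' : d' ∘ₗ d' = 0)
    (hi : dQ ∘ₗ i = i ∘ₗ dU0) (hj : d' ∘ₗ j = j ∘ₗ dQ)
    (hη : d' ∘ₗ η.toLinearMap + η.toLinearMap ∘ₗ dU0 = j ∘ₗ i) :
    Function.Injective (fun x : Q => ((η.symm (j x), x, (0 : U2)) : U0 × Q × U2))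
    ∧ ∀ x : Q,
      ((dU0 (η.symm (j x)),
        i (η.symm (j x)) + dQ x,
        η (η.symm (j x)) + j x + d' (0 : U2)) : U0 × Q × U2)
      = (η.symm (j (dQ x + i (η.symm (j x)))),
         dQ x + i (η.symm (j x)),
         (0 : U2)) :=
  stmt_12_general dU0 dQ d' i j η hj hη
end

section
/- With the hypotheses of the preceding setup, the cokernel of τ : (Q, d + iη⁻¹j)[1] → Q̃ is isomorphic as a cochain complex to the cone of an isomorphism λ : U₂′ → U₂, hence is acyclic; consequently τ is a quasi-isomorphism, i.e., H*(Q̃) ≅ H*((Q, d + iη⁻¹j)[1]). -/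
/-!
In characteristic 2 every vector is its own negative, so no signs appear. A cochain
`v = (a, b, c)` of `Q̃` whose `U₂`-component of `D v` vanishes splits as
`v = τ y + D (e, 0, 0)` with `e = η⁻¹ c` and `y = b + i e`, and then
`(d + iη⁻¹j) y` is the `Q`-component of `D v`; both follow from the homotopy relation
`j i e = d' c + η (d e)`. Thus `U₀ ⊕ U₂`, the cone of `η`, contributes nothing: every
cocycle of `Q̃` is cohomologous to the image of a cocycle, and a cocycle whose image is
exact is itself exact.
-/

lemma add_self_eq_zero_of_charTwo {R M : Type*} [Ring R] [CharP R 2]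
    [AddCommGroup M] [Module R M] (v : M) : v + v = 0 := by
  rw [← two_smul R v, CharTwo.two_eq_zero, zero_smul]

namespace ConeTwist

variable {R U0 Q U2 : Type*} [Ring R] [AddCommGroup U0] [Module R U0]
  [AddCommGroup Q] [Module R Q] [AddCommGroup U2] [Module R U2]

def totalDiff (dU0 : U0 →ₗ[R] U0) (dQ : Q →ₗ[R] Q) (d' : U2 →ₗ[R] U2)
    (i : U0 →ₗ[R] Q) (j : Q →ₗ[R] U2) (η : U0 ≃ₗ[R] U2) :
    (U0 × Q × U2) →ₗ[R] (U0 × Q × U2) :=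
  (dU0 ∘ₗ LinearMap.fst R U0 (Q × U2)).prod
    ((i ∘ₗ LinearMap.fst R U0 (Q × U2) +
        dQ ∘ₗ (LinearMap.fst R Q U2) ∘ₗ (LinearMap.snd R U0 (Q × U2))).prod
      (η.toLinearMap ∘ₗ LinearMap.fst R U0 (Q × U2) +
        j ∘ₗ (LinearMap.fst R Q U2) ∘ₗ (LinearMap.snd R U0 (Q × U2)) +
        d' ∘ₗ (LinearMap.snd R Q U2) ∘ₗ (LinearMap.snd R U0 (Q × U2))))

def twistedDiff (dQ : Q →ₗ[R] Q) (i : U0 →ₗ[R] Q) (j : Q →ₗ[R] U2) (η : U0 ≃ₗ[R] U2) :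
    Q →ₗ[R] Q :=
  dQ + i ∘ₗ η.symm.toLinearMap ∘ₗ j

def tau (j : Q →ₗ[R] U2) (η : U0 ≃ₗ[R] U2) : Q →ₗ[R] (U0 × Q × U2) :=
  (η.symm.toLinearMap ∘ₗ j).prod (LinearMap.id.prod 0)

variable {dU0 : U0 →ₗ[R] U0} {dQ : Q →ₗ[R] Q} {d' : U2 →ₗ[R] U2}
  {i : U0 →ₗ[R] Q} {j : Q →ₗ[R] U2} {η : U0 ≃ₗ[R] U2}

@[simp]
lemma totalDiff_apply (v : U0 × Q × U2) :
    totalDiff dU0 dQ d' i j η v =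
      (dU0 v.1, i v.1 + dQ v.2.1, η v.1 + j v.2.1 + d' v.2.2) :=
  rfl

@[simp]
lemma twistedDiff_apply (x : Q) : twistedDiff dQ i j η x = dQ x + i (η.symm (j x)) :=
  rfl

@[simp]
lemma tau_apply (x : Q) : tau j η x = (η.symm (j x), x, 0) :=
  rfl

variable [CharP R 2]

lemma symm_j_add_i_symm (hη : d' ∘ₗ η.toLinearMap + η.toLinearMap ∘ₗ dU0 = j ∘ₗ i)
    {v : U0 × Q × U2} (hv : (totalDiff dU0 dQ d' i j η v).2.2 = 0) :
    η.symm (j (v.2.1 + i (η.symm v.2.2))) = v.1 + dU0 (η.symm v.2.2) := by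
  obtain ⟨a, b, c⟩ := v
  have hji : j (i (η.symm c)) = d' c + η (dU0 (η.symm c)) := by
    simpa using (LinearMap.congr_fun hη (η.symm c)).symm
  simp only [totalDiff_apply] at hv ⊢
  rw [LinearEquiv.symm_apply_eq, map_add, map_add, hji]
  linear_combination (norm := abel) hv - add_self_eq_zero_of_charTwo (R := R) (η a)

lemma eq_tau_add_totalDiff (hη : d' ∘ₗ η.toLinearMap + η.toLinearMap ∘ₗ dU0 = j ∘ₗ i)
    {v : U0 × Q × U2} (hv : (totalDiff dU0 dQ d' i j η v).2.2 = 0) :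
    v = tau j η (v.2.1 + i (η.symm v.2.2)) +
      totalDiff dU0 dQ d' i j η (η.symm v.2.2, 0, 0) := by
  obtain ⟨a, b, c⟩ := v
  simp only [tau_apply, totalDiff_apply, symm_j_add_i_symm hη hv, map_zero, add_zero,
    LinearEquiv.apply_symm_apply, Prod.mk_add_mk, zero_add, add_assoc,
    add_self_eq_zero_of_charTwo (R := R)]

lemma twistedDiff_apply_add_i_symm (hi : dQ ∘ₗ i = i ∘ₗ dU0)
    (hη : d' ∘ₗ η.toLinearMap + η.toLinearMap ∘ₗ dU0 = j ∘ₗ i)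
    {v : U0 × Q × U2} (hv : (totalDiff dU0 dQ d' i j η v).2.2 = 0) :
    twistedDiff dQ i j η (v.2.1 + i (η.symm v.2.2)) = (totalDiff dU0 dQ d' i j η v).2.1 := by
  have hdi : dQ (i (η.symm v.2.2)) = i (dU0 (η.symm v.2.2)) := LinearMap.congr_fun hi _
  rw [twistedDiff_apply, symm_j_add_i_symm hη hv, map_add, hdi, map_add, add_add_add_comm,
    add_self_eq_zero_of_charTwo (R := R), add_zero, add_comm, totalDiff_apply]

end ConeTwist

open ConeTwist in
theorem stmt_13_general {F U0 Q U2 : Type*} [Field F] [CharP F 2]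
    [AddCommGroup U0] [Module F U0] [AddCommGroup Q] [Module F Q]
    [AddCommGroup U2] [Module F U2]
    (dU0 : U0 →ₗ[F] U0) (dQ : Q →ₗ[F] Q) (d' : U2 →ₗ[F] U2)
    (i : U0 →ₗ[F] Q) (j : Q →ₗ[F] U2) (η : U0 ≃ₗ[F] U2)
    (hi : dQ ∘ₗ i = i ∘ₗ dU0)
    (hη : d' ∘ₗ η.toLinearMap + η.toLinearMap ∘ₗ dU0 = j ∘ₗ i) :
    let δQ : Q →ₗ[F] Q := dQ + i ∘ₗ η.symm.toLinearMap ∘ₗ j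
    let p0 : (U0 × Q × U2) →ₗ[F] U0 := LinearMap.fst F U0 (Q × U2)
    let p1 : (U0 × Q × U2) →ₗ[F] Q :=
      (LinearMap.fst F Q U2) ∘ₗ (LinearMap.snd F U0 (Q × U2))
    let p2 : (U0 × Q × U2) →ₗ[F] U2 :=
      (LinearMap.snd F Q U2) ∘ₗ (LinearMap.snd F U0 (Q × U2))
    let D : (U0 × Q × U2) →ₗ[F] (U0 × Q × U2) :=
      (dU0 ∘ₗ p0).prod ((i ∘ₗ p0 + dQ ∘ₗ p1).prod
        (η.toLinearMap ∘ₗ p0 + j ∘ₗ p1 + d' ∘ₗ p2))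
    let τ : Q →ₗ[F] (U0 × Q × U2) :=
      (η.symm.toLinearMap ∘ₗ j).prod (LinearMap.id.prod (0 : Q →ₗ[F] U2))
    (∀ v : U0 × Q × U2, D v = 0 →
        ∃ x : Q, δQ x = 0 ∧ v - τ x ∈ LinearMap.range D)
    ∧ (∀ x : Q, δQ x = 0 → τ x ∈ LinearMap.range D →
        ∃ y : Q, δQ y = x) := by
  intro δQ p0 p1 p2 D τ
  constructor
  · intro v hDv
    have hv : (totalDiff dU0 dQ d' i j η v).2.2 = 0 := congrArg (·.2.2) hDv
    exact ⟨_, (twistedDiff_apply_add_i_symm hi hη hv).trans (congrArg (·.2.1) hDv),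
      _, (sub_eq_of_eq_add' (eq_tau_add_totalDiff hη hv)).symm⟩
  · rintro x - ⟨v, hDv⟩
    have hv : (totalDiff dU0 dQ d' i j η v).2.2 = 0 := congrArg (·.2.2) hDv
    exact ⟨_, (twistedDiff_apply_add_i_symm hi hη hv).trans (congrArg (·.2.1) hDv)⟩

/-- With the setup of the filtered complex `Q̃ = U₀ ⊕ Q ⊕ U₂` with total
differential `D`, the chain map `τ(x) = η⁻¹j(x) + x` is a quasi-isomorphism
from `(Q, dQ + iη⁻¹j)[1]` to `Q̃`: it induces an isomorphism on cohomology,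
expressed as surjectivity and injectivity of the induced map on `ker/im`. -/
theorem stmt_13 {F U0 Q U2 : Type*} [Field F] [CharP F 2]
    [AddCommGroup U0] [Module F U0] [AddCommGroup Q] [Module F Q]
    [AddCommGroup U2] [Module F U2]
    (dU0 : U0 →ₗ[F] U0) (dQ : Q →ₗ[F] Q) (d' : U2 →ₗ[F] U2)
    (i : U0 →ₗ[F] Q) (j : Q →ₗ[F] U2) (η : U0 ≃ₗ[F] U2)
    (hd0 : dU0 ∘ₗ dU0 = 0) (hdQ : dQ ∘ₗ dQ = 0) (hd' : d' ∘ₗ d' = 0)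
    (hi : dQ ∘ₗ i = i ∘ₗ dU0) (hj : d' ∘ₗ j = j ∘ₗ dQ)
    (hη : d' ∘ₗ η.toLinearMap + η.toLinearMap ∘ₗ dU0 = j ∘ₗ i) :
    let δQ : Q →ₗ[F] Q := dQ + i ∘ₗ η.symm.toLinearMap ∘ₗ j
    let p0 : (U0 × Q × U2) →ₗ[F] U0 := LinearMap.fst F U0 (Q × U2)
    let p1 : (U0 × Q × U2) →ₗ[F] Q :=
      (LinearMap.fst F Q U2) ∘ₗ (LinearMap.snd F U0 (Q × U2))
    let p2 : (U0 × Q × U2) →ₗ[F] U2 :=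
      (LinearMap.snd F Q U2) ∘ₗ (LinearMap.snd F U0 (Q × U2))
    let D : (U0 × Q × U2) →ₗ[F] (U0 × Q × U2) :=
      (dU0 ∘ₗ p0).prod ((i ∘ₗ p0 + dQ ∘ₗ p1).prod
        (η.toLinearMap ∘ₗ p0 + j ∘ₗ p1 + d' ∘ₗ p2))
    let τ : Q →ₗ[F] (U0 × Q × U2) :=
      (η.symm.toLinearMap ∘ₗ j).prod (LinearMap.id.prod (0 : Q →ₗ[F] U2))
    (∀ v : U0 × Q × U2, D v = 0 →
        ∃ x : Q, δQ x = 0 ∧ v - τ x ∈ LinearMap.range D)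
    ∧ (∀ x : Q, δQ x = 0 → τ x ∈ LinearMap.range D →
        ∃ y : Q, δQ y = x) :=
  stmt_13_general dU0 dQ d' i j η hi hη
end

section
/- Let F ⊆ E be fields, and let C_F, C_E be finite-dimensional cochain complexes over F and E respectively with a common basis indexed by the same finite set, such that whenever the differential coefficient c^E_{(x,y)} is nonzero in C_E, the corresponding coefficient c^F_{(x,y)} is nonzero in C_F, and moreover each c^F is a rational expression that specializes to c^E. If C_F has coefficients in a field of rational functions (generic coefficients), then for every i, dim_F H^i(C_F) ≤ dim_E H^i(C_E). -/
/-- The cohomology at the middle spot of `A → B → C`. -/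
abbrev homologyAt' {F A B C : Type*} [Field F]
    [AddCommGroup A] [Module F A] [AddCommGroup B] [Module F B]
    [AddCommGroup C] [Module F C] (f : A →ₗ[F] B) (g : B →ₗ[F] C) :=
  LinearMap.ker g ⧸ Submodule.comap (LinearMap.ker g).subtype (LinearMap.range f)

/-! Over a field the middle cohomology of `C⁰ → C¹ → C²` has dimension
`dim C¹ - rank d⁰ - rank d¹`, so it suffices that specializing the entries of a matrix cannot
raise its rank. The rank is the size of a largest nonvanishing minor, and a minor of the
specialized matrix is the specialization of the corresponding generic minor, which therefore
cannot vanish either. -/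

open Module Submodule

theorem exists_linearIndependent_comp_of_le_finrank_span {K V ι : Type*} [Field K]
    [AddCommGroup V] [Module K V] [Finite ι] (v : ι → V) {k : ℕ}
    (hk : k ≤ finrank K (span K (Set.range v))) :
    ∃ c : Fin k → ι, LinearIndependent K (v ∘ c) := by
  obtain ⟨κ, a, ha, hspan, hli⟩ := exists_linearIndependent' K v
  have : Finite κ := Finite.of_injective a ha
  have : Fintype κ := Fintype.ofFinite κ
  have hcard : finrank K (span K (Set.range v)) = Fintype.card κ := by
    rw [← hspan, finrank_span_eq_card hli]
  obtain ⟨e⟩ := Function.Embedding.nonempty_of_card_le (α := Fin k) (β := κ) (by simpa [← hcard])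
  exact ⟨a ∘ e, hli.comp e e.injective⟩

theorem finrank_homologyAt'_add_finrank_range_add_finrank_range {K U V W : Type*} [Field K]
    [AddCommGroup U] [Module K U] [AddCommGroup V] [Module K V] [AddCommGroup W] [Module K W]
    [FiniteDimensional K V] (f : U →ₗ[K] V) (g : V →ₗ[K] W) (hgf : g ∘ₗ f = 0) :
    finrank K (homologyAt' f g) + finrank K (LinearMap.range f) + finrank K (LinearMap.range g)
      = finrank K V := by
  have hle : LinearMap.range f ≤ LinearMap.ker g := LinearMap.range_le_ker_iff.mpr hgf
  have hH : finrank K (homologyAt' f g)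
      + finrank K (comap (LinearMap.ker g).subtype (LinearMap.range f))
      = finrank K (LinearMap.ker g) :=
    Submodule.finrank_quotient_add_finrank _
  have hB := (comapSubtypeEquivOfLe hle).finrank_eq
  have hV := LinearMap.finrank_range_add_finrank_ker g
  omega

namespace Matrix

theorem exists_submatrix_det_ne_zero {K m n : Type*} [Field K] [Fintype m] [Fintype n]
    (A : Matrix m n K) :
    ∃ (r : Fin A.rank → m) (c : Fin A.rank → n), (A.submatrix r c).det ≠ 0 := by
  obtain ⟨c, hc⟩ :=
    exists_linearIndependent_comp_of_le_finrank_span A.col (rank_eq_finrank_span_cols A).le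
  set B := A.submatrix id c
  have hB : B.rank = A.rank := by
    rw [← rank_transpose, LinearIndependent.rank_matrix (M := Bᵀ) hc, Fintype.card_fin]
  obtain ⟨r, hr⟩ :=
    exists_linearIndependent_comp_of_le_finrank_span B.row (hB ▸ B.rank_eq_finrank_span_row).le
  have hunit : IsUnit (B.submatrix r id) := linearIndependent_rows_iff_isUnit.mp hr
  exact ⟨r, c, ((isUnit_iff_isUnit_det _).mp hunit).ne_zero⟩

theorem le_rank_of_submatrix_det_ne_zero {R m n : Type*} [CommRing R] [IsDomain R]
    [Fintype m] [Fintype n] {k : ℕ} (A : Matrix m n R) (r : Fin k → m) (c : Fin k → n)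
    (h : (A.submatrix r c).det ≠ 0) : k ≤ A.rank := by
  simpa [rank_of_det_ne_zero h] using A.rank_submatrix_le r c

theorem rank_map_le_rank_map_of_injective {R K L m n : Type*} [CommRing R] [Field K] [Field L]
    [Fintype m] [Fintype n] (φ : R →+* K) {ι : R →+* L} (hι : Function.Injective ι)
    (A : Matrix m n R) : (A.map φ).rank ≤ (A.map ι).rank := by
  obtain ⟨r, c, hφ⟩ := (A.map φ).exists_submatrix_det_ne_zero
  refine (A.map ι).le_rank_of_submatrix_det_ne_zero r c ?_
  rw [submatrix_map, ← RingHom.mapMatrix_apply, ← RingHom.map_det] at hφ ⊢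
  exact (map_ne_zero_iff ι hι).mpr (ne_of_apply_ne φ (by simpa using hφ))

theorem finrank_homologyAt'_add_rank_add_rank {K l m n : Type*} [Field K]
    [Fintype l] [Fintype m] [Fintype n] (M₀ : Matrix m l K) (M₁ : Matrix n m K)
    (h : M₁ * M₀ = 0) :
    finrank K (homologyAt' M₀.mulVecLin M₁.mulVecLin) + M₀.rank + M₁.rank = Fintype.card m := by
  rw [← finrank_fintype_fun_eq_card K]
  refine finrank_homologyAt'_add_finrank_range_add_finrank_range _ _ ?_
  rw [← mulVecLin_mul, h, mulVecLin_zero]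

theorem finrank_homologyAt'_map_le {R K L l m n : Type*} [CommRing R] [Field K] [Field L]
    [Fintype l] [Fintype m] [Fintype n] (φ : R →+* K) {ι : R →+* L} (hι : Function.Injective ι)
    (M₀ : Matrix m l R) (M₁ : Matrix n m R) (h : M₁ * M₀ = 0) :
    finrank L (homologyAt' (M₀.map ι).mulVecLin (M₁.map ι).mulVecLin)
      ≤ finrank K (homologyAt' (M₀.map φ).mulVecLin (M₁.map φ).mulVecLin) := by
  have hK := finrank_homologyAt'_add_rank_add_rank (M₀.map φ) (M₁.map φ)
    (by rw [← Matrix.map_mul, h, Matrix.map_zero _ (map_zero φ)])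
  have hL := finrank_homologyAt'_add_rank_add_rank (M₀.map ι) (M₁.map ι)
    (by rw [← Matrix.map_mul, h, Matrix.map_zero _ (map_zero ι)])
  have h₀ := M₀.rank_map_le_rank_map_of_injective φ hι
  have h₁ := M₁.rank_map_le_rank_map_of_injective φ hι
  omega

end Matrix

theorem stmt_17_general {F E B0 B1 B2 : Type*} [Field F] [Field E]
    [Fintype B0] [Fintype B1] [Fintype B2]
    (S : Subring F) (ψ : S →+* E)
    (c0 : B0 → B1 → S) (c1 : B1 → B2 → S)
    (hdd : ∀ (a : B0) (b : B2), ∑ w : B1, c0 a w * c1 w b = 0) :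
    Module.finrank F (homologyAt'
        (Matrix.mulVecLin (Matrix.of fun (t : B1) (z : B0) => ((c0 z t : F))))
        (Matrix.mulVecLin (Matrix.of fun (t : B2) (z : B1) => ((c1 z t : F)))))
      ≤ Module.finrank E (homologyAt'
        (Matrix.mulVecLin (Matrix.of fun (t : B1) (z : B0) => ψ (c0 z t)))
        (Matrix.mulVecLin (Matrix.of fun (t : B2) (z : B1) => ψ (c1 z t)))) := by
  set M₀ : Matrix B1 B0 S := Matrix.of fun t z => c0 z t
  set M₁ : Matrix B2 B1 S := Matrix.of fun t z => c1 z t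
  have hM : M₁ * M₀ = 0 := Matrix.ext fun b a => by
    simpa [M₀, M₁, Matrix.mul_apply, mul_comm] using hdd a b
  exact Matrix.finrank_homologyAt'_map_le ψ (ι := S.subtype) Subtype.val_injective M₀ M₁ hM

/-- Genericity / upper semicontinuity: let `C_F` and `C_E` be finite
cochain complexes on the same finite basis, over fields `F` and `E`, whose
differential coefficients are given by common "rational expressions": elements
of a subring `S ⊆ F` specializing to `E` via a ring homomorphism `ψ : S →+* E`.
Assume `d² = 0`, the coefficients are homogeneous of degree `+1`, and whenever a
specialized coefficient is nonzero in `E` the generic coefficient is nonzero in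
`F`.  Then at each spot, `dim_F H^i(C_F) ≤ dim_E H^i(C_E)`. -/
theorem stmt_17 {F E B0 B1 B2 : Type*} [Field F] [Field E]
    [Fintype B0] [Fintype B1] [Fintype B2]
    [DecidableEq B0] [DecidableEq B1] [DecidableEq B2]
    (S : Subring F) (ψ : S →+* E)
    (c0 : B0 → B1 → S) (c1 : B1 → B2 → S)
    (hdd : ∀ (a : B0) (b : B2), ∑ w : B1, c0 a w * c1 w b = 0)
    (hspec0 : ∀ (a : B0) (b : B1), ψ (c0 a b) ≠ 0 → ((c0 a b : F) ≠ 0))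
    (hspec1 : ∀ (a : B1) (b : B2), ψ (c1 a b) ≠ 0 → ((c1 a b : F) ≠ 0)) :
    Module.finrank F (homologyAt'
        (Matrix.mulVecLin (Matrix.of fun (t : B1) (z : B0) => ((c0 z t : F))))
        (Matrix.mulVecLin (Matrix.of fun (t : B2) (z : B1) => ((c1 z t : F)))))
      ≤ Module.finrank E (homologyAt'
        (Matrix.mulVecLin (Matrix.of fun (t : B1) (z : B0) => ψ (c0 z t)))
        (Matrix.mulVecLin (Matrix.of fun (t : B2) (z : B1) => ψ (c1 z t)))) :=
  stmt_17_general S ψ c0 c1 hdd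
end
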